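/- arXiv:2310.13560 — 10 statements merged into one kernel-verified Lean document; each statement's English description precedes it below -/
import Mathlib

section
/- Let G be a group with identity e and (Q, {*^g}_{g∈G}) a G-family of racks. Then the set X = Q × G, viewed as the disjoint union over a ∈ Q of the groups {a} × G with multiplication (a,g)(a,h) = (a, gh), equipped with the binary operation (a,g)*(b,h) = (a *^h b, h⁻¹gh), is a multiple group rack. -/
/-- A `G`-family of racks `(Q, {*^g})`, written `f a g b = a *^g b`, yields a
multiple group rack on `X = Q × G = ⨆_{a∈Q} ({a} × G)` with
`(a,g)(a,h) = (a,gh)` and `(a,g)*(b,h) = (a *^h b, h⁻¹gh)`. -/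
theorem stmt_3 (G : Type*) [Group G] (Q : Type*) (f : Q → G → Q → Q)
    (hmul : ∀ (a : Q) (g h : G) (b : Q), f a (g * h) b = f (f a g b) h b)
    (hone : ∀ (a b : Q), f a (1 : G) b = a)
    (hdist : ∀ (a b c : Q) (g h : G),
      f (f a g b) h c = f (f a h c) (h⁻¹ * g * h) (f b h c)) :
    -- the MGR operation on Q × G
    ∀ rop : (Q × G) → (Q × G) → (Q × G),
      (rop = fun x y => (f x.1 y.2 y.1, y.2⁻¹ * x.2 * y.2)) →
      -- axiom (1): x * (y₁ y₂) = (x * y₁) * y₂ and x * e_λ = x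
      ((∀ (x : Q × G) (b : Q) (h₁ h₂ : G),
          rop x (b, h₁ * h₂) = rop (rop x (b, h₁)) (b, h₂)) ∧
       (∀ (x : Q × G) (b : Q), rop x (b, (1 : G)) = x) ∧
      -- axiom (2): self-distributivity
       (∀ x y z : Q × G, rop (rop x y) z = rop (rop x z) (rop y z)) ∧
      -- axiom (3): (x₁ x₂) * y = (x₁ * y)(x₂ * y), with x₁ * y, x₂ * y
      -- lying in a common fiber
       (∀ (a : Q) (g g' : G) (y : Q × G),
          (rop (a, g) y).1 = (rop (a, g') y).1 ∧
          rop (a, g * g') y = ((rop (a, g) y).1, (rop (a, g) y).2 * (rop (a, g') y).2))) := by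
  intro rop hrop
  subst hrop
  refine ⟨?_, ?_, ?_, ?_⟩
  · intro x b h₁ h₂
    simp only [Prod.mk.injEq]
    constructor
    · exact hmul x.1 h₁ h₂ b
    · group
  · intro x b
    simp [hone]
  · intro x y z
    simp only [Prod.mk.injEq]
    constructor
    · exact hdist x.1 y.1 z.1 y.2 z.2
    · group
  · intro a g g' y
    refine ⟨rfl, ?_⟩
    simp only [Prod.mk.injEq]
    refine ⟨trivial, ?_⟩
    group
end

section
/- Let M be a module over the ring R' = R[t^{±1},s]/(s(t+s-1), f(1-t), fs, h(1-t)+(f+g)s, (f+g+h)s), where f,g,h ∈ R[t^{±1},s], viewed as a (t,s)-rack with x*y = tx+sy and as an M-set with υ⋆x = tυ+sx. Then θ: M³ → M defined by θ(x,y,z) = fx + gy + hz satisfies the shadow rack 2-cocycle condition: θ(υ*a, b, c) + θ(υ, a, c) + θ(υ*c, a*c, b*c) = θ(υ, b, c) + θ(υ*b, a*b, c) + θ(υ, a, b) for all υ, a, b, c ∈ M. -/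
/-- Let `M` be a module over a commutative ring `S` playing the role of
`R' = R[t^{±1},s]/(s(t+s-1), f(1-t), fs, h(1-t)+(f+g)s, (f+g+h)s)`,
viewed as a `(t,s)`-rack with `x*y = t•x + s•y` (and as an `M`-set via the
same operation).  Then `θ(x,y,z) = f•x + g•y + h•z` satisfies the shadow rack
2-cocycle condition. -/
theorem stmt_9 (S : Type*) [CommRing S] (t s f g h : S) (ht : IsUnit t)
    (h1 : s * (t + s - 1) = 0) (h2 : f * (1 - t) = 0) (h3 : f * s = 0)
    (h4 : h * (1 - t) + (f + g) * s = 0) (h5 : (f + g + h) * s = 0)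
    (M : Type*) [AddCommGroup M] [Module S M] :
    ∀ ρ : M → M → M, (ρ = fun x y => t • x + s • y) →
    ∀ θ : M → M → M → M, (θ = fun x y z => f • x + g • y + h • z) →
    ∀ υ a b c : M,
      θ (ρ υ a) b c + θ υ a c + θ (ρ υ c) (ρ a c) (ρ b c) =
      θ υ b c + θ (ρ υ b) (ρ a b) c + θ υ a b := by
  rintro ρ rfl θ rfl υ a b c
  simp only [smul_add, smul_smul]
  match_scalars
  · linear_combination -h2
  · linear_combination h3
  · linear_combination -h4
  · linear_combination h5
end

section
/- Let Q be a rack, n, m positive integers, e₁,…,e_m ∈ {−1,1} and i₁,…,i_m ∈ {1,…,n}. Then Q^n with the binary operation (a₁,…,a_n) * (b₁,…,b_n) = (a₁ *^{e₁} b_{i₁} *^{e₂} ⋯ *^{e_m} b_{i_m}, …, a_n *^{e₁} b_{i₁} *^{e₂} ⋯ *^{e_m} b_{i_m}) is a rack; that is, each right translation is bijective and self-distributivity holds. -/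
/-- A rack. -/
structure RackS (Q : Type*) where
  op : Q → Q → Q
  bij : ∀ b : Q, Function.Bijective (fun a => op a b)
  dist : ∀ a b c : Q, op (op a b) c = op (op a c) (op b c)

/-- The right translation `S_b` as a permutation of `Q`. -/
noncomputable def RackS.S {Q : Type*} (R : RackS Q) (b : Q) : Equiv.Perm Q :=
  Equiv.ofBijective _ (R.bij b)

/-- `a *^{e₁} b_{i₁} *^{e₂} ⋯ *^{e_m} b_{i_m}`, evaluated left to right. -/
noncomputable def par {Q : Type*} (R : RackS Q) {n m : ℕ}
    (e : Fin m → ℤ) (idx : Fin m → Fin n) (b : Fin n → Q) (x : Q) : Q :=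
  (List.finRange m).foldl (fun x j => ((R.S (b (idx j))) ^ (e j)) x) x

noncomputable def permOf {Q : Type*} (R : RackS Q) {n m : ℕ}
    (e : Fin m → ℤ) (idx : Fin m → Fin n) (b : Fin n → Q) : Equiv.Perm Q :=
  (((List.finRange m).map fun j => (R.S (b (idx j))) ^ (e j)).reverse).prod

lemma S_apply {Q : Type*} (R : RackS Q) (b a : Q) : R.S b a = R.op a b := rfl

lemma foldl_eq {Q : Type*} (R : RackS Q) {n m : ℕ}
    (e : Fin m → ℤ) (idx : Fin m → Fin n) (b : Fin n → Q) (l : List (Fin m)) (x : Q) :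
    l.foldl (fun x j => ((R.S (b (idx j))) ^ (e j)) x) x =
      ((l.map fun j => (R.S (b (idx j))) ^ (e j)).reverse).prod x := by
  induction l generalizing x with
  | nil => simp
  | cons j l ih => simp [ih, List.prod_append]

lemma par_eq {Q : Type*} (R : RackS Q) {n m : ℕ}
    (e : Fin m → ℤ) (idx : Fin m → Fin n) (b : Fin n → Q) (x : Q) :
    par R e idx b x = permOf R e idx b x :=
  foldl_eq R e idx b _ x

lemma S_conj {Q : Type*} (R : RackS Q) (c x : Q) :
    R.S c * R.S x * (R.S c)⁻¹ = R.S (R.S c x) := by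
  rw [mul_inv_eq_iff_eq_mul]
  ext a
  exact R.dist a x c

/-- The covariance property of a permutation. -/
def Cov {Q : Type*} (R : RackS Q) (p : Equiv.Perm Q) : Prop :=
  ∀ x, p * R.S x * p⁻¹ = R.S (p x)

lemma cov_mul {Q : Type*} (R : RackS Q) {p q : Equiv.Perm Q}
    (hp : Cov R p) (hq : Cov R q) : Cov R (p * q) := by
  intro x
  have h1 := hq x
  have h2 := hp (q x)
  rw [Equiv.Perm.mul_apply, ← h2, ← h1]
  group

lemma cov_inv {Q : Type*} (R : RackS Q) {p : Equiv.Perm Q}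
    (hp : Cov R p) : Cov R p⁻¹ := by
  intro x
  have := hp (p⁻¹ x)
  rw [show p (p⁻¹ x) = x from p.apply_symm_apply x] at this
  rw [← this]
  group

lemma cov_S {Q : Type*} (R : RackS Q) (c : Q) : Cov R (R.S c) :=
  fun x => S_conj R c x

lemma cov_zpow {Q : Type*} (R : RackS Q) (c : Q) (e : ℤ)
    (he : e = 1 ∨ e = -1) : Cov R ((R.S c) ^ e) := by
  rcases he with h | h <;> subst h
  · simpa using cov_S R c
  · simpa using cov_inv R (cov_S R c)

lemma cov_prod {Q : Type*} (R : RackS Q) (l : List (Equiv.Perm Q))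
    (h : ∀ p ∈ l, Cov R p) : Cov R l.prod := by
  induction l with
  | nil => intro x; simp
  | cons p l ih =>
      simp only [List.prod_cons]
      exact cov_mul R (h p (by simp)) (ih fun q hq => h q (by simp [hq]))

lemma cov_permOf {Q : Type*} (R : RackS Q) {n m : ℕ}
    (e : Fin m → ℤ) (he : ∀ j, e j = 1 ∨ e j = -1) (idx : Fin m → Fin n)
    (b : Fin n → Q) : Cov R (permOf R e idx b) := by
  apply cov_prod
  intro p hp
  simp only [List.mem_reverse, List.mem_map] at hp
  obtain ⟨j, -, rfl⟩ := hp
  exact cov_zpow R _ _ (he j)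

lemma conj_prod {G : Type*} [Group G] (P : G) (l : List G) :
    P * l.prod * P⁻¹ = (l.map fun q => P * q * P⁻¹).prod := by
  induction l with
  | nil => simp
  | cons q l ih =>
      rw [List.map_cons, List.prod_cons, List.prod_cons, ← ih]
      group

lemma permOf_conj {Q : Type*} (R : RackS Q) {n m : ℕ}
    (e : Fin m → ℤ) (he : ∀ j, e j = 1 ∨ e j = -1) (idx : Fin m → Fin n)
    (b c : Fin n → Q) :
    permOf R e idx (fun k => permOf R e idx c (b k)) =
      permOf R e idx c * permOf R e idx b * (permOf R e idx c)⁻¹ := by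
  set P := permOf R e idx c with hP
  have hcov : Cov R P := cov_permOf R e he idx c
  unfold permOf
  rw [conj_prod, ← List.map_reverse, ← List.map_reverse, List.map_map]
  refine congrArg List.prod (List.map_congr_left fun j _ => ?_)
  have h := hcov (b (idx j))
  have h2 : (P * R.S (b (idx j)) * P⁻¹) ^ e j = P * R.S (b (idx j)) ^ e j * P⁻¹ :=
    conj_zpow
  simp only [Function.comp_apply, ← h2, h]

/-- For a rack `Q`, positive `n, m`, signs `e_j ∈ {−1,1}` and indices
`i_j ∈ {1,…,n}`, the product `Q^n` with
`(a₁,…,a_n)*(b₁,…,b_n) = (a₁ *^{e₁} b_{i₁} ⋯ *^{e_m} b_{i_m}, …)` is a rack. -/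
theorem stmt_10 (Q : Type*) (R : RackS Q) (n m : ℕ) (hn : 0 < n) (hm : 0 < m)
    (e : Fin m → ℤ) (he : ∀ j, e j = 1 ∨ e j = -1) (idx : Fin m → Fin n) :
    ∀ rop : (Fin n → Q) → (Fin n → Q) → (Fin n → Q),
      (rop = fun a b => fun k => par R e idx b (a k)) →
      (∀ b, Function.Bijective (fun a => rop a b)) ∧
      (∀ a b c, rop (rop a b) c = rop (rop a c) (rop b c)) := by
  intro rop hrop
  subst hrop
  constructor
  · intro b
    have : (fun a : Fin n → Q => fun k => par R e idx b (a k)) =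
        ⇑(Equiv.piCongrRight fun _ : Fin n => permOf R e idx b) := by
      funext a; funext k; simp [par_eq, Equiv.piCongrRight]
    rw [this]
    exact (Equiv.piCongrRight fun _ : Fin n => permOf R e idx b).bijective
  · intro a b c
    funext k
    simp only [par_eq]
    rw [permOf_conj R e he idx b c]
    simp
end

section
/- Let Q be a rack, Y a Q-set, and fix e₁,…,e_m ∈ {−1,1}, i₁,…,i_m ∈ {1,…,n}. Equip Q^n with the rack operation (a₁,…,a_n)*(b₁,…,b_n) = (a₁ *^{e₁} b_{i₁} ⋯ *^{e_m} b_{i_m}, …, a_n *^{e₁} b_{i₁} ⋯ *^{e_m} b_{i_m}). Then Y is a Q^n-set via υ ⋆ (b₁,…,b_n) = υ ⋆^{e₁} b_{i₁} ⋆^{e₂} ⋯ ⋆^{e_m} b_{i_m}: each such translation of Y is bijective, and (υ⋆x)⋆y = (υ⋆y)⋆(x*y) for all υ ∈ Y and x,y ∈ Q^n. -/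
/-- A `Q`-set. -/
structure QSet {Q : Type*} (R : RackS Q) (Y : Type*) where
  act : Y → Q → Y
  bij : ∀ a : Q, Function.Bijective (fun υ => act υ a)
  compat : ∀ (υ : Y) (a b : Q), act (act υ a) b = act (act υ b) (R.op a b)

/-- The translation `T_a` as a permutation of `Y`. -/
noncomputable def QSet.T {Q Y : Type*} {R : RackS Q} (S : QSet R Y) (a : Q) :
    Equiv.Perm Y :=
  Equiv.ofBijective _ (S.bij a)

/-- `υ ⋆^{e₁} b_{i₁} ⋆^{e₂} ⋯ ⋆^{e_m} b_{i_m}`, evaluated left to right. -/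
noncomputable def parY {Q Y : Type*} {R : RackS Q} (S : QSet R Y) {n m : ℕ}
    (e : Fin m → ℤ) (idx : Fin m → Fin n) (b : Fin n → Q) (υ : Y) : Y :=
  (List.finRange m).foldl (fun υ j => ((S.T (b (idx j))) ^ (e j)) υ) υ

/-!
The translations of a `Q`-set intertwine the rack with conjugation: `T_b T_a T_b⁻¹ = T_{a * b}`,
hence `T_b^g T_a^f = T_{a *^g b}^f T_b^g` for all integers `f, g`. Pushing the word
`υ ↦ υ ⋆ y` letter by letter through the word `υ ↦ υ ⋆ x` therefore turns each letter
`⋆^{e_j} x_{i_j}` into `⋆^{e_j} (x_{i_j} ⋆ y)`, which is the compatibility identity for the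
parallel operation.
-/

theorem List.bijective_foldl {α β : Type*} (l : List β) {f : α → β → α}
    (hf : ∀ b, Function.Bijective (f · b)) : Function.Bijective (fun a => l.foldl f a) := by
  induction l with
  | nil => exact Function.bijective_id
  | cons b l ih => exact ih.comp (hf b)

namespace QSet

variable {Q Y : Type*} {R : RackS Q} (S : QSet R Y)

theorem semiconjBy_T (b a : Q) : SemiconjBy (S.T b) (S.T a) (S.T (R.S b a)) :=
  Equiv.ext fun υ => S.compat υ a b

theorem semiconjBy_T_zpow (b : Q) (g : ℤ) (a : Q) :
    SemiconjBy (S.T b ^ g) (S.T a) (S.T ((R.S b ^ g) a)) := by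
  induction g using Int.induction_on generalizing a with
  | zero => simp
  | succ k ih =>
    rw [zpow_add_one, zpow_add_one]
    exact (ih _).mul_left (semiconjBy_T S b a)
  | pred k ih =>
    have hinv : SemiconjBy (S.T b)⁻¹ (S.T a) (S.T ((R.S b)⁻¹ a)) := by
      simpa using (semiconjBy_T S b ((R.S b)⁻¹ a)).inv_symm_left
    rw [zpow_sub_one, zpow_sub_one]
    exact (ih _).mul_left hinv

theorem T_zpow_apply_T_zpow_apply (b a : Q) (g f : ℤ) (υ : Y) :
    (S.T b ^ g) ((S.T a ^ f) υ) = (S.T ((R.S b ^ g) a) ^ f) ((S.T b ^ g) υ) :=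
  congrArg (· υ) ((semiconjBy_T_zpow S b g a).zpow_right f)

end QSet

section Parallel

variable {Q Y : Type*} {R : RackS Q} (S : QSet R Y) {n m : ℕ} (e : Fin m → ℤ)
  (idx : Fin m → Fin n)

theorem parY_T_zpow_apply (y : Fin n → Q) (a : Q) (f : ℤ) (υ : Y) :
    parY S e idx y ((S.T a ^ f) υ) = (S.T (par R e idx y a) ^ f) (parY S e idx y υ) :=
  List.foldl_hom₂ _ (fun a υ => (S.T a ^ f) υ) _ _ _ a υ
    fun a υ _ => (S.T_zpow_apply_T_zpow_apply _ a _ f υ).symm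

theorem parY_parY (υ : Y) (x y : Fin n → Q) :
    parY S e idx y (parY S e idx x υ)
      = parY S e idx (fun k => par R e idx y (x k)) (parY S e idx y υ) :=
  (List.foldl_hom (parY S e idx y) fun υ _ => (parY_T_zpow_apply S e idx y _ _ υ).symm).symm

theorem bijective_parY (b : Fin n → Q) : Function.Bijective (parY S e idx b) :=
  (List.finRange m).bijective_foldl fun j => (S.T (b (idx j)) ^ e j).bijective

end Parallel

theorem stmt_11_general (Q Y : Type*) (R : RackS Q) (S : QSet R Y) (n m : ℕ)
    (e : Fin m → ℤ) (idx : Fin m → Fin n) :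
    ∀ rop : (Fin n → Q) → (Fin n → Q) → (Fin n → Q),
      (rop = fun a b => fun k => par R e idx b (a k)) →
    ∀ ract : Y → (Fin n → Q) → Y,
      (ract = fun υ b => parY S e idx b υ) →
      (∀ b : Fin n → Q, Function.Bijective (fun υ => ract υ b)) ∧
      (∀ (υ : Y) (x y : Fin n → Q),
        ract (ract υ x) y = ract (ract υ y) (rop x y)) := by
  rintro rop rfl ract rfl
  exact ⟨bijective_parY S e idx, parY_parY S e idx⟩

/-- With `Q^n` carrying the parallel rack operation, `Y` is a `Q^n`-set via
`υ ⋆ (b₁,…,b_n) = υ ⋆^{e₁} b_{i₁} ⋯ ⋆^{e_m} b_{i_m}`. -/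
theorem stmt_11 (Q Y : Type*) (R : RackS Q) (S : QSet R Y) (n m : ℕ)
    (e : Fin m → ℤ) (he : ∀ j, e j = 1 ∨ e j = -1) (idx : Fin m → Fin n) :
    ∀ rop : (Fin n → Q) → (Fin n → Q) → (Fin n → Q),
      (rop = fun a b => fun k => par R e idx b (a k)) →
    ∀ ract : Y → (Fin n → Q) → Y,
      (ract = fun υ b => parY S e idx b υ) →
      (∀ b : Fin n → Q, Function.Bijective (fun υ => ract υ b)) ∧
      (∀ (υ : Y) (x y : Fin n → Q),
        ract (ract υ x) y = ract (ract υ y) (rop x y)) :=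
  stmt_11_general Q Y R S n m e idx
end

section
/- Let X = ⨆_λ G_λ be a multiple group rack, Y an X-set, and define C_n(X)_Y as the free abelian group on tuples ⟨υ⟩⟨x_{1,1},…,x_{1,n₁}⟩⋯⟨x_{k,1},…,x_{k,n_k}⟩ with n₁+⋯+n_k = n and each block of entries from a single group G_λ, with the boundary homomorphism ∂_n defined via the operators ∂̃ as in the MGR chain complex. Then ∂_{n-1} ∘ ∂_n = 0, so (C_n(X)_Y, ∂_n) is a chain complex. -/
/-- A multiple group rack `X = ⨆_{λ∈Λ} G_λ`, encoded by its underlying set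
`X`, the fiber projection `p : X → Λ`, a fiberwise group structure
(`mul`, `one`, `inv`, with axioms imposed only within a fiber) and the rack
operation `op`. -/
structure MGRData (X : Type*) (Λ : Type*) where
  p : X → Λ
  mul : X → X → X
  one : Λ → X
  inv : X → X
  op : X → X → X
  p_one : ∀ l, p (one l) = l
  p_mul : ∀ x y, p x = p y → p (mul x y) = p x
  p_inv : ∀ x, p (inv x) = p x
  mul_assoc : ∀ x y z, p x = p y → p y = p z →
    mul (mul x y) z = mul x (mul y z)
  mul_one : ∀ x, mul x (one (p x)) = x
  one_mul : ∀ x, mul (one (p x)) x = x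
  mul_inv : ∀ x, mul x (inv x) = one (p x)
  op_mulr : ∀ x y₁ y₂, p y₁ = p y₂ → op x (mul y₁ y₂) = op (op x y₁) y₂
  op_oner : ∀ x l, op x (one l) = x
  dist : ∀ x y z, op (op x y) z = op (op x z) (op y z)
  p_op : ∀ x₁ x₂ y, p x₁ = p x₂ → p (op x₁ y) = p (op x₂ y)
  mul_op : ∀ x₁ x₂ y, p x₁ = p x₂ → op (mul x₁ x₂) y = mul (op x₁ y) (op x₂ y)

/-- An `X`-set for an MGR `X`. -/
structure MGRSet {X Λ : Type*} (M : MGRData X Λ) (Y : Type*) where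
  act : Y → X → Y
  act_one : ∀ (υ : Y) (l : Λ), act υ (M.one l) = υ
  act_mul : ∀ (υ : Y) (x₁ x₂ : X), M.p x₁ = M.p x₂ →
    act υ (M.mul x₁ x₂) = act (act υ x₁) x₂
  act_op : ∀ (υ : Y) (x y : X), act (act υ x) y = act (act υ y) (M.op x y)

section
variable {X Λ Y : Type*} (M : MGRData X Λ) (S : MGRSet M Y) (d : X)

/-- A generator `⟨υ⟩⟨x₁⟩⋯⟨x_k⟩` of the MGR chain complex, encoded as a point
of `Y` together with a list of blocks (lists) of elements of `X`; empty blocks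
`⟨⟩` are deleted. -/
noncomputable def mgen (υ : Y) (L : List (List X)) : (Y × List (List X)) →₀ ℤ :=
  Finsupp.single (υ, L.filter (fun b => !b.isEmpty)) 1

/-- The contribution `±⟨υ⟩⟨x₁⟩⋯∂̃⟨x_i⟩⋯⟨x_k⟩` of one block: `∂̃⟨x⟩ =
`*x₁⟨x⁰⟩ + Σ_{i=1}^m (−1)^i ⟨x^i⟩`, where `*x₁` acts by `op`/`act` on
everything to its left. `d` is a default element used only out of range. -/
noncomputable def blockBdry (υ : Y) (pre : List (List X)) (xs : List X)
    (post : List (List X)) : (Y × List (List X)) →₀ ℤ :=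
  if xs.isEmpty then 0 else
    mgen (S.act υ (xs.headD d))
        (pre.map (List.map (fun z => M.op z (xs.headD d))) ++ (xs.tail :: post))
      + ∑ j ∈ Finset.range xs.length, ((-1 : ℤ) ^ (j + 1)) •
          mgen υ (pre ++
            ((if j + 1 < xs.length then
                xs.take j ++ [M.mul (xs.getD j d) (xs.getD (j + 1) d)]
                  ++ xs.drop (j + 2)
              else xs.dropLast) :: post))

/-- The boundary `∂` of a generator. -/
noncomputable def mbdryGen (υ : Y) (L : List (List X)) : (Y × List (List X)) →₀ ℤ :=
  ∑ i ∈ Finset.range L.length,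
    ((-1 : ℤ) ^ (((L.take i).map List.length).sum)) •
      blockBdry M S d υ (L.take i) (L.getD i []) (L.drop (i + 1))

/-- The boundary homomorphism of the MGR chain complex, extended linearly. -/
noncomputable def mbdry (f : (Y × List (List X)) →₀ ℤ) : (Y × List (List X)) →₀ ℤ :=
  f.sum fun q c => c • mbdryGen M S d q.1 q.2

/-- A valid generator: every block is non-empty and lies in a single fiber. -/
def validL (L : List (List X)) : Prop :=
  ∀ b ∈ L, b ≠ [] ∧ ∀ x ∈ b, ∀ y ∈ b, M.p x = M.p y

end

/-!
Induction on the number of blocks, simultaneously for all `X`-sets. The blocks to the left of a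
given one can be stored in the base point: `Y × List (List X)` is again an `X`-set, `x` acting on
the stored blocks by `* x`, and concatenation identifies `⟨(υ, [b])⟩⟨L⟩` with `⟨υ⟩⟨b⟩⟨L⟩`. Then
`∂⟨υ⟩⟨b⟩⟨L⟩ = ∂̃⟨b⟩⟨L⟩ ± ∂⟨(υ, [b])⟩⟨L⟩`, and `∂∂⟨υ⟩⟨b⟩⟨L⟩` has three kinds of terms:
`∂̃∂̃⟨b⟩`, which vanishes by the simplicial identities among the faces of one block; the mixed
terms, which cancel because the faces of `b` commute with those of later blocks (this is where
`(υ ⋆ x) ⋆ y = (υ ⋆ y) ⋆ (x * y)` and `(x₁ x₂) * y = (x₁ * y) (x₂ * y)` enter); and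
`∂∂⟨(υ, [b])⟩⟨L⟩`, which vanishes by induction.
-/

open Finset in
theorem sum_sum_neg_one_pow_smul_eq_zero_of_simplicial {A : Type*} [AddCommGroup A] (n : ℕ)
    (F : ℕ → ℕ → A) (hF : ∀ j i, j ≤ i → i < n → F j i = F (i + 1) j) :
    ∑ j ∈ range (n + 1), ∑ i ∈ range n, (-1 : ℤ) ^ (j + i) • F j i = 0 := by
  rw [← sum_product']
  refine sum_involution (fun p _ => if p.1 ≤ p.2 then (p.2 + 1, p.1) else (p.2, p.1 - 1))
    ?_ ?_ ?_ ?_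
  · rintro ⟨j, i⟩ hp
    simp only [mem_product, mem_range] at hp
    split_ifs with hji
    · rw [← hF j i hji hp.2, show i + 1 + j = j + i + 1 by omega, pow_succ]
      simp
    · rw [hF i (j - 1) (by omega) (by omega), Nat.sub_add_cancel (by omega),
        show j + i = i + (j - 1) + 1 by omega, pow_succ]
      simp
  · rintro ⟨j, i⟩ _ _
    split_ifs <;> simp <;> omega
  · rintro ⟨j, i⟩ hp
    simp only [mem_product, mem_range] at hp ⊢
    split_ifs <;> simp <;> omega
  · rintro ⟨j, i⟩ hp
    simp only [mem_product, mem_range] at hp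
    split_ifs <;> simp <;> omega

namespace MGRData

variable {X Λ : Type*}

def InOneFiber (M : MGRData X Λ) (b : List X) : Prop :=
  ∀ x ∈ b, ∀ y ∈ b, M.p x = M.p y

theorem InOneFiber.of_cons {M : MGRData X Λ} {x : X} {b : List X}
    (h : M.InOneFiber (x :: b)) : M.InOneFiber b :=
  fun y hy z hz => h y (List.mem_cons_of_mem x hy) z (List.mem_cons_of_mem x hz)

variable (M : MGRData X Λ)

def mergeAt : ℕ → List X → List X
  | _, [] => []
  | 0, [_] => []
  | 0, x :: y :: t => M.mul x y :: t
  | n + 1, x :: t => x :: mergeAt n t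

@[simp] theorem mergeAt_nil (n : ℕ) : M.mergeAt n [] = [] := by
  cases n <;> rfl

@[simp] theorem mergeAt_succ_cons (n : ℕ) (x : X) (t : List X) :
    M.mergeAt (n + 1) (x :: t) = x :: M.mergeAt n t := by
  simp [mergeAt]

theorem ite_eq_mergeAt (d : X) (b : List X) (j : ℕ) (hj : j < b.length) :
    (if j + 1 < b.length then
        b.take j ++ [M.mul (b.getD j d) (b.getD (j + 1) d)] ++ b.drop (j + 2)
      else b.dropLast) = M.mergeAt j b := by
  induction b generalizing j with
  | nil => simp at hj
  | cons x t ih =>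
    match j, t with
    | 0, [] => simp [mergeAt]
    | 0, y :: t => simp [mergeAt]
    | j + 1, t =>
      obtain ⟨y, t, rfl⟩ := List.exists_cons_of_length_pos (by simp at hj; omega : 0 < t.length)
      rw [mergeAt_succ_cons, ← ih j (by simpa using hj)]
      by_cases h : j + 1 < (y :: t).length
      · rw [if_pos h, if_pos (by simpa using h)]
        simp [List.take_succ_cons]
      · rw [if_neg h, if_neg (by simpa using h)]
        simp

theorem length_mergeAt (b : List X) (j : ℕ) (hj : j < b.length) :
    (M.mergeAt j b).length = b.length - 1 := by
  induction b generalizing j with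
  | nil => simp at hj
  | cons x t ih =>
    match j, t with
    | 0, [] => rfl
    | 0, y :: t => rfl
    | j + 1, t =>
      simp only [mergeAt_succ_cons, List.length_cons, ih j (by simpa using hj)]
      simp at hj
      omega

theorem headD_mergeAt_succ (d : X) (b : List X) (j : ℕ) :
    (M.mergeAt (j + 1) b).headD d = b.headD d := by
  cases b <;> simp

theorem tail_mergeAt_succ (b : List X) (j : ℕ) :
    (M.mergeAt (j + 1) b).tail = M.mergeAt j b.tail := by
  cases b <;> simp

theorem mergeAt_map (f : X → X)
    (hf : ∀ x y, M.p x = M.p y → f (M.mul x y) = M.mul (f x) (f y))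
    (b : List X) (hb : M.InOneFiber b) (j : ℕ) :
    M.mergeAt j (b.map f) = (M.mergeAt j b).map f := by
  induction b generalizing j with
  | nil => simp
  | cons x t ih =>
    match j, t with
    | 0, [] => rfl
    | 0, y :: t => simp [mergeAt, hf x y (hb x (by simp) y (by simp))]
    | j + 1, t => simp [ih hb.of_cons]

theorem mergeAt_mergeAt (b : List X) (hb : M.InOneFiber b) (q p : ℕ) (hqp : q ≤ p) :
    M.mergeAt p (M.mergeAt q b) = M.mergeAt q (M.mergeAt (p + 1) b) := by
  induction b generalizing q p with
  | nil => simp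
  | cons x t ih =>
    match q, p, t with
    | 0, 0, [] => rfl
    | 0, 0, [_] => rfl
    | 0, 0, y :: z :: t =>
      simp [mergeAt, M.mul_assoc x y z (hb x (by simp) y (by simp)) (hb y (by simp) z (by simp))]
    | 0, p + 1, [] => rfl
    | 0, p + 1, [_] => simp [mergeAt]
    | 0, p + 1, _ :: _ :: _ => simp [mergeAt]
    | q + 1, p + 1, t => simp [ih hb.of_cons q p (by omega)]

end MGRData

namespace MGRSet

variable {X Λ Y : Type*} {M : MGRData X Λ}

/-- The blocks to the left of the current one, carried by the base point; `x` acts on them by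
`* x`, as `∂̃` acts on everything to the left of a block. -/
def prefixed (S : MGRSet M Y) : MGRSet M (Y × List (List X)) where
  act w x := (S.act w.1 x, w.2.map (List.map (M.op · x)))
  act_one w l := by simp [S.act_one, M.op_oner]
  act_mul w x₁ x₂ h := Prod.ext (S.act_mul _ _ _ h) (by
    simp only [List.map_map, Function.comp_def]
    exact List.map_congr_left fun b _ => List.map_congr_left fun z _ => M.op_mulr z _ _ h)
  act_op w x y := Prod.ext (S.act_op _ x y) (by
    simp only [List.map_map, Function.comp_def]
    exact List.map_congr_left fun b _ => List.map_congr_left fun z _ => M.dist z x y)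

end MGRSet

namespace MGRChain

variable {X Λ Y : Type*}

abbrev Chains (X Y : Type*) : Type _ := (Y × List (List X)) →₀ ℤ

abbrev dropEmpty (L : List (List X)) : List (List X) :=
  L.filter fun b => !b.isEmpty

theorem dropEmpty_append (A B : List (List X)) :
    dropEmpty (A ++ B) = dropEmpty A ++ dropEmpty B :=
  List.filter_append ..

theorem dropEmpty_map (f : X → X) (L : List (List X)) :
    dropEmpty (L.map (List.map f)) = (dropEmpty L).map (List.map f) := by
  simp [List.filter_map, Function.comp_def]

theorem dropEmpty_dropEmpty (L : List (List X)) : dropEmpty (dropEmpty L) = dropEmpty L := by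
  simp [List.filter_filter]

theorem dropEmpty_eq_self {L : List (List X)} (h : ∀ b ∈ L, b ≠ []) : dropEmpty L = L :=
  List.filter_eq_self.mpr fun b hb => by simpa using h b hb

theorem mgen_eq_single (υ : Y) (L : List (List X)) :
    mgen υ L = Finsupp.single (υ, dropEmpty L) 1 :=
  rfl

theorem mgen_congr {υ : Y} {A B : List (List X)} (h : dropEmpty A = dropEmpty B) :
    mgen υ A = mgen υ B := by
  rw [mgen_eq_single, mgen_eq_single, h]

noncomputable def concatPrefix : Chains X (Y × List (List X)) →ₗ[ℤ] Chains X Y :=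
  Finsupp.lmapDomain ℤ ℤ fun t => (t.1.1, dropEmpty t.1.2 ++ t.2)

theorem concatPrefix_single (t : (Y × List (List X)) × List (List X)) (c : ℤ) :
    concatPrefix (Finsupp.single t c) = Finsupp.single (t.1.1, dropEmpty t.1.2 ++ t.2) c := by
  simp [concatPrefix]

theorem concatPrefix_mgen (υ : Y) (P Q : List (List X)) :
    concatPrefix (mgen (υ, P) Q) = mgen υ (dropEmpty P ++ Q) := by
  rw [mgen_eq_single, mgen_eq_single, concatPrefix_single, dropEmpty_append, dropEmpty_dropEmpty]

section

variable (M : MGRData X Λ) (S : MGRSet M Y) (d : X)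

/- The terms of `∂̃⟨b⟩ = *b₁⟨b₂,…,b_m⟩ + Σ_{i=1}^m (-1)^i ⟨b₁,…,b_i b_{i+1},…,b_m⟩` are indexed
by `j ≤ m`. Term `0` moves the base point by `⋆ b₁` (`faceBase`), acts by `* b₁` on the blocks
to its left (`faceTwist`) and leaves the block `b.tail` (`faceBlock`); term `i ≥ 1` leaves
`M.mergeAt (i - 1) b`, which for `i = m` drops `b_m`. -/

def faceBase (υ : Y) (b : List X) : ℕ → Y
  | 0 => S.act υ (b.headD d)
  | _ + 1 => υ

def faceTwist (b : List X) : ℕ → X → X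
  | 0 => fun z => M.op z (b.headD d)
  | _ + 1 => id

def faceBlock (b : List X) : ℕ → List X
  | 0 => b.tail
  | j + 1 => M.mergeAt j b

@[simp] theorem faceBase_zero (υ : Y) (b : List X) :
    faceBase M S d υ b 0 = S.act υ (b.headD d) := rfl

@[simp] theorem faceBase_succ (υ : Y) (b : List X) (j : ℕ) :
    faceBase M S d υ b (j + 1) = υ := rfl

@[simp] theorem faceTwist_zero (b : List X) :
    faceTwist M d b 0 = fun z => M.op z (b.headD d) := rfl

@[simp] theorem faceTwist_succ (b : List X) (j : ℕ) : faceTwist M d b (j + 1) = id := rfl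

@[simp] theorem faceBlock_zero (b : List X) : faceBlock M b 0 = b.tail := rfl

@[simp] theorem faceBlock_succ (b : List X) (j : ℕ) : faceBlock M b (j + 1) = M.mergeAt j b :=
  rfl

theorem length_faceBlock (b : List X) (j : ℕ) (hj : j < b.length + 1) :
    (faceBlock M b j).length = b.length - 1 := by
  cases j with
  | zero => simp
  | succ j => exact M.length_mergeAt b j (by omega)

@[simp] theorem blockBdry_nil (υ : Y) (pre post : List (List X)) :
    blockBdry M S d υ pre [] post = 0 := by
  simp [blockBdry]

theorem blockBdry_eq_sum (υ : Y) (pre : List (List X)) (xs : List X) (post : List (List X))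
    (hxs : xs ≠ []) :
    blockBdry M S d υ pre xs post =
      ∑ j ∈ Finset.range (xs.length + 1), (-1 : ℤ) ^ j •
        mgen (faceBase M S d υ xs j)
          (pre.map (List.map (faceTwist M d xs j)) ++ faceBlock M xs j :: post) := by
  rw [blockBdry, if_neg (by simpa using hxs), Finset.sum_range_succ', add_comm]
  congr 1
  · refine Finset.sum_congr rfl fun j hj => ?_
    rw [M.ite_eq_mergeAt d xs j (Finset.mem_range.mp hj)]
    simp
  · simp

theorem faceBlock_faceBlock (b : List X) (hb : M.InOneFiber b) {j i : ℕ} (hji : j ≤ i) :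
    faceBlock M (faceBlock M b j) i = faceBlock M (faceBlock M b (i + 1)) j := by
  match j, i with
  | 0, 0 =>
    match b with
    | [] | [_] | _ :: _ :: _ => rfl
  | 0, i + 1 => exact (M.tail_mergeAt_succ b i).symm
  | j + 1, i + 1 => exact M.mergeAt_mergeAt b hb j i (by omega)

theorem faceBase_faceBase (υ : Y) (b : List X) (hb₂ : 1 < b.length) (hb : M.InOneFiber b)
    {j i : ℕ} (hji : j ≤ i) :
    faceBase M S d (faceBase M S d υ b j) (faceBlock M b j) i
      = faceBase M S d (faceBase M S d υ b (i + 1)) (faceBlock M b (i + 1)) j := by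
  match j, i with
  | 0, 0 =>
    obtain ⟨x, y, t, rfl⟩ : ∃ x y t, b = x :: y :: t := by
      match b with
      | x :: y :: t => exact ⟨x, y, t, rfl⟩
    exact (S.act_mul υ x y (hb x (by simp) y (by simp))).symm
  | 0, i + 1 => simp only [faceBase_zero, faceBase_succ, faceBlock_succ, M.headD_mergeAt_succ]
  | j + 1, i + 1 => rfl

theorem sum_faces_blockBdry_eq_zero (υ : Y) (b : List X) (hb₀ : b ≠ []) (hb : M.InOneFiber b)
    (L : List (List X)) :
    ∑ j ∈ Finset.range (b.length + 1),
      (-1 : ℤ) ^ j • blockBdry M S d (faceBase M S d υ b j) [] (faceBlock M b j) L = 0 := by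
  obtain ⟨n, hn⟩ : ∃ n, b.length = n + 1 :=
    Nat.exists_eq_succ_of_ne_zero (by simpa using hb₀)
  rcases n.eq_zero_or_pos with rfl | hn₀
  · obtain ⟨x, rfl⟩ := List.length_eq_one_iff.mp hn
    simp [Finset.sum_range_succ, MGRData.mergeAt]
  have hface : ∀ j ∈ Finset.range (b.length + 1),
      (-1 : ℤ) ^ j • blockBdry M S d (faceBase M S d υ b j) [] (faceBlock M b j) L
        = ∑ i ∈ Finset.range b.length, (-1 : ℤ) ^ (j + i) •
            mgen (faceBase M S d (faceBase M S d υ b j) (faceBlock M b j) i)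
              (faceBlock M (faceBlock M b j) i :: L) := by
    intro j hj
    have hlen := length_faceBlock M b j (Finset.mem_range.mp hj)
    rw [blockBdry_eq_sum M S d _ _ _ _ (by rw [← List.length_pos_iff]; omega), hlen,
      Nat.sub_add_cancel (by omega), Finset.smul_sum]
    simp [smul_smul, pow_add]
  rw [Finset.sum_congr rfl hface]
  exact sum_sum_neg_one_pow_smul_eq_zero_of_simplicial _ _ fun j i hji _ => by
    rw [faceBase_faceBase M S d υ b (by omega) hb hji, faceBlock_faceBlock M b hb hji]

noncomputable def bdry : Chains X Y →ₗ[ℤ] Chains X Y :=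
  Finsupp.linearCombination ℤ fun q => mbdryGen M S d q.1 q.2

theorem mbdry_eq_bdry (f : Chains X Y) : mbdry M S d f = bdry M S d f :=
  (Finsupp.linearCombination_apply ℤ f).symm

theorem bdry_single (q : Y × List (List X)) (c : ℤ) :
    bdry M S d (Finsupp.single q c) = c • mbdryGen M S d q.1 q.2 :=
  Finsupp.linearCombination_single ℤ c q

noncomputable def leadBdry : Chains X (Y × List (List X)) →ₗ[ℤ] Chains X Y :=
  Finsupp.linearCombination ℤ fun t => blockBdry M S d t.1.1 [] (t.1.2.headD []) t.2

theorem faceBase_prefixed (υ : Y) (P : List (List X)) (xs : List X) (j : ℕ) :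
    faceBase M S.prefixed d (υ, P) xs j
      = (faceBase M S d υ xs j, P.map (List.map (faceTwist M d xs j))) := by
  cases j <;> simp [MGRSet.prefixed]

theorem concatPrefix_blockBdry (υ : Y) (P pre : List (List X)) (xs : List X)
    (post : List (List X)) :
    concatPrefix (blockBdry M S.prefixed d (υ, P) pre xs post)
      = blockBdry M S d υ (dropEmpty P ++ pre) xs post := by
  rcases eq_or_ne xs [] with rfl | hxs
  · simp
  rw [blockBdry_eq_sum M _ d _ _ _ _ hxs, blockBdry_eq_sum M S d _ _ _ _ hxs, map_sum]
  refine Finset.sum_congr rfl fun j _ => ?_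
  rw [map_smul, faceBase_prefixed, concatPrefix_mgen]
  exact congrArg _ (mgen_congr (by simp [dropEmpty_map]))

theorem concatPrefix_mbdryGen (υ : Y) (P L : List (List X)) :
    concatPrefix (mbdryGen M S.prefixed d (υ, P) L)
      = ∑ i ∈ Finset.range L.length, (-1 : ℤ) ^ ((L.take i).map List.length).sum •
          blockBdry M S d υ (dropEmpty P ++ L.take i) (L.getD i []) (L.drop (i + 1)) := by
  rw [mbdryGen, map_sum]
  exact Finset.sum_congr rfl fun i _ => by rw [map_smul, concatPrefix_blockBdry]

theorem mbdryGen_dropEmpty_singleton_append (υ : Y) (b : List X) (L : List (List X)) :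
    mbdryGen M S d υ (dropEmpty [b] ++ L)
      = blockBdry M S d υ [] b L
        + (-1 : ℤ) ^ b.length • concatPrefix (mbdryGen M S.prefixed d (υ, [b]) L) := by
  rw [concatPrefix_mbdryGen]
  rcases eq_or_ne b [] with rfl | hb
  · simp [mbdryGen]
  rw [dropEmpty_eq_self (by simpa using hb), List.singleton_append, mbdryGen, List.length_cons,
    Finset.sum_range_succ', add_comm, Finset.smul_sum]
  congr 1
  · simp
  · refine Finset.sum_congr rfl fun i _ => ?_
    simp [smul_smul, pow_add]

theorem blockBdry_dropEmpty (υ : Y) (pre : List (List X)) (xs : List X) (post : List (List X)) :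
    blockBdry M S d υ pre xs (dropEmpty post) = blockBdry M S d υ pre xs post := by
  rcases eq_or_ne xs [] with rfl | hxs
  · simp
  rw [blockBdry_eq_sum M S d _ _ _ _ hxs, blockBdry_eq_sum M S d _ _ _ _ hxs]
  refine Finset.sum_congr rfl fun j _ => congrArg _ (mgen_congr ?_)
  rw [← List.singleton_append, ← List.singleton_append (l := post)]
  simp only [dropEmpty_append, dropEmpty_dropEmpty]

theorem leadBdry_mgen (w : Y × List (List X)) (Q : List (List X)) :
    leadBdry M S d (mgen w Q) = blockBdry M S d w.1 [] (w.2.headD []) Q := by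
  rw [mgen_eq_single, leadBdry, Finsupp.linearCombination_single, one_smul, blockBdry_dropEmpty]

theorem faceTwist_mul (xs : List X) (i : ℕ) {x y : X} (h : M.p x = M.p y) :
    faceTwist M d xs i (M.mul x y) = M.mul (faceTwist M d xs i x) (faceTwist M d xs i y) := by
  cases i with
  | zero => exact M.mul_op x y _ h
  | succ i => rfl

theorem faceBlock_map (f : X → X)
    (hf : ∀ x y, M.p x = M.p y → f (M.mul x y) = M.mul (f x) (f y))
    (b : List X) (hb : M.InOneFiber b) (j : ℕ) :
    faceBlock M (b.map f) j = (faceBlock M b j).map f := by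
  cases j with
  | zero => exact List.map_tail.symm
  | succ j => exact M.mergeAt_map f hf b hb j

theorem faceBase_map_faceTwist (υ : Y) (xs b : List X) (hb : b ≠ []) (i j : ℕ) :
    faceBase M S d (faceBase M S d υ xs i) (b.map (faceTwist M d xs i)) j
      = faceBase M S d (faceBase M S d υ b j) xs i := by
  obtain ⟨x, b, rfl⟩ := List.exists_cons_of_ne_nil hb
  match i, j with
  | 0, 0 => exact (S.act_op υ x _).symm
  | 0, _ + 1 | _ + 1, 0 | _ + 1, _ + 1 => rfl

theorem leadBdry_blockBdry (υ : Y) (b : List X) (hb₀ : b ≠ []) (hb : M.InOneFiber b)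
    (pre : List (List X)) (xs : List X) (post : List (List X)) :
    leadBdry M S d (blockBdry M S.prefixed d (υ, [b]) pre xs post)
      = ∑ j ∈ Finset.range (b.length + 1), (-1 : ℤ) ^ j •
          blockBdry M S d (faceBase M S d υ b j) (dropEmpty [faceBlock M b j] ++ pre) xs post := by
  rcases eq_or_ne xs [] with rfl | hxs
  · simp
  simp only [blockBdry_eq_sum M _ d _ _ _ _ hxs, map_sum, Finset.smul_sum]
  rw [Finset.sum_comm]
  refine Finset.sum_congr rfl fun i _ => ?_
  rw [map_smul, leadBdry_mgen, faceBase_prefixed, List.map_singleton, List.headD_cons,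
    blockBdry_eq_sum M S d _ _ _ _ (by simpa using hb₀), List.length_map, Finset.smul_sum]
  refine Finset.sum_congr rfl fun j _ => ?_
  rw [smul_smul, smul_smul, mul_comm, faceBase_map_faceTwist M S d υ xs b hb₀,
    faceBlock_map M _ (fun x y h => faceTwist_mul M d xs i h) b hb j]
  refine congrArg _ (mgen_congr ?_)
  simp only [List.map_nil, List.nil_append]
  rw [← List.singleton_append, ← List.map_singleton (f := List.map (faceTwist M d xs i)),
    ← List.append_assoc, ← List.map_append]
  simp only [dropEmpty_append, dropEmpty_map, dropEmpty_dropEmpty]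

theorem leadBdry_mbdryGen (υ : Y) (b : List X) (hb₀ : b ≠ []) (hb : M.InOneFiber b)
    (L : List (List X)) :
    leadBdry M S d (mbdryGen M S.prefixed d (υ, [b]) L)
      = ∑ j ∈ Finset.range (b.length + 1), (-1 : ℤ) ^ j •
          concatPrefix (mbdryGen M S.prefixed d (faceBase M S d υ b j, [faceBlock M b j]) L) := by
  simp only [concatPrefix_mbdryGen]
  simp only [mbdryGen, map_sum, map_smul,
    leadBdry_blockBdry M S d υ b hb₀ hb, Finset.smul_sum]
  rw [Finset.sum_comm]
  exact Finset.sum_congr rfl fun i _ => Finset.sum_congr rfl fun j _ => smul_comm _ _ _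

theorem mbdryGen_prefixed_mem_supported (υ : Y) (P L : List (List X)) :
    mbdryGen M S.prefixed d (υ, P) L ∈ Finsupp.supported ℤ ℤ
      {t : (Y × List (List X)) × List (List X) | t.1.2.map List.length = P.map List.length} := by
  refine Submodule.sum_mem _ fun i _ => Submodule.smul_mem _ _ ?_
  rcases eq_or_ne (L.getD i []) [] with h | h
  · rw [h, blockBdry_nil]
    exact Submodule.zero_mem _
  rw [blockBdry_eq_sum M _ d _ _ _ _ h]
  refine Submodule.sum_mem _ fun j _ =>
    Submodule.smul_mem _ _ (Finsupp.single_mem_supported ℤ 1 ?_)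
  simp [faceBase_prefixed, Function.comp_def]

theorem bdry_concatPrefix {k : ℕ} {g : Chains X (Y × List (List X))}
    (hg : g ∈ Finsupp.supported ℤ ℤ {t | t.1.2.map List.length = [k]}) :
    bdry M S d (concatPrefix g)
      = leadBdry M S d g + (-1 : ℤ) ^ k • concatPrefix (bdry M S.prefixed d g) := by
  rw [Finsupp.supported_eq_span_single] at hg
  induction hg using Submodule.span_induction with
  | mem _ h =>
    obtain ⟨⟨⟨υ, P⟩, Q⟩, hP, rfl⟩ := h
    obtain ⟨b, rfl, rfl⟩ := List.map_eq_singleton_iff.mp hP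
    rw [concatPrefix_single, bdry_single, bdry_single, leadBdry, Finsupp.linearCombination_single,
      one_smul, one_smul, one_smul, mbdryGen_dropEmpty_singleton_append]
    rfl
  | zero => simp
  | add g₁ g₂ _ _ h₁ h₂ =>
    simp only [map_add, h₁, h₂, smul_add]
    abel
  | smul c g _ h => simp only [map_smul, h, smul_add, smul_comm c]

theorem bdry_blockBdry_nil (υ : Y) (b : List X) (hb₀ : b ≠ []) (L : List (List X))
    (hL : ∀ c ∈ L, c ≠ []) :
    bdry M S d (blockBdry M S d υ [] b L)
      = ∑ j ∈ Finset.range (b.length + 1),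
          (-1 : ℤ) ^ j • blockBdry M S d (faceBase M S d υ b j) [] (faceBlock M b j) L
        + (-1 : ℤ) ^ (b.length - 1) • ∑ j ∈ Finset.range (b.length + 1), (-1 : ℤ) ^ j •
            concatPrefix
              (mbdryGen M S.prefixed d (faceBase M S d υ b j, [faceBlock M b j]) L) := by
  rw [blockBdry_eq_sum M S d _ _ _ _ hb₀, map_sum, Finset.smul_sum, ← Finset.sum_add_distrib]
  refine Finset.sum_congr rfl fun j hj => ?_
  rw [map_smul, mgen_eq_single, bdry_single, one_smul, List.map_nil, List.nil_append,
    ← List.singleton_append, dropEmpty_append, dropEmpty_eq_self hL,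
    mbdryGen_dropEmpty_singleton_append, length_faceBlock M b j (Finset.mem_range.mp hj),
    smul_add, smul_comm ((-1 : ℤ) ^ j)]

end

universe u v

/-- The first block is moved into the base point of `S.prefixed`, so the induction has to range
over `X`-sets in a universe containing `Y × List (List X)`. -/
theorem bdry_mbdryGen_eq_zero_of_max_univ {X : Type u} {Λ : Type*} (M : MGRData X Λ) (d : X)
    (L : List (List X)) (hL : validL M L) :
    ∀ {Y : Type max u v} (S : MGRSet M Y) (υ : Y), bdry M S d (mbdryGen M S d υ L) = 0 := by
  induction L with
  | nil => simp [mbdryGen]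
  | cons b L ih =>
    intro Y S υ
    obtain ⟨hb₀, hb⟩ := hL b List.mem_cons_self
    have hL' : validL M L := fun c hc => hL c (List.mem_cons_of_mem b hc)
    have hg := mbdryGen_prefixed_mem_supported M S d υ [b] L
    rw [List.map_singleton] at hg
    obtain ⟨n, hn⟩ : ∃ n, b.length = n + 1 :=
      Nat.exists_eq_succ_of_ne_zero (by simpa using hb₀)
    rw [← List.singleton_append, ← dropEmpty_eq_self (L := [b]) (by simpa using hb₀),
      mbdryGen_dropEmpty_singleton_append, map_add, map_smul,
      bdry_blockBdry_nil M S d υ b hb₀ L (fun c hc => (hL' c hc).1),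
      sum_faces_blockBdry_eq_zero M S d υ b hb₀ hb, bdry_concatPrefix M S d hg,
      ih hL' S.prefixed, leadBdry_mbdryGen M S d υ b hb₀ hb L, map_zero, smul_zero, add_zero,
      zero_add, ← add_smul, hn, Nat.add_sub_cancel, pow_succ]
    simp

section Equivariant

variable {Y₁ Y₂ : Type*}

noncomputable def mapBase (φ : Y₁ → Y₂) : Chains X Y₁ →ₗ[ℤ] Chains X Y₂ :=
  Finsupp.lmapDomain ℤ ℤ (Prod.map φ id)

variable (M : MGRData X Λ) (S₁ : MGRSet M Y₁) (S₂ : MGRSet M Y₂) (d : X)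
  {φ : Y₁ → Y₂}

theorem mapBase_injective (hφ : Function.Injective φ) :
    Function.Injective (mapBase (X := X) φ) :=
  Finsupp.mapDomain_injective (hφ.prodMap Function.injective_id)

theorem mapBase_single (q : Y₁ × List (List X)) (c : ℤ) :
    mapBase φ (Finsupp.single q c) = Finsupp.single (φ q.1, q.2) c :=
  Finsupp.mapDomain_single

theorem mapBase_mgen (υ : Y₁) (L : List (List X)) : mapBase φ (mgen υ L) = mgen (φ υ) L := by
  rw [mgen_eq_single, mapBase_single, mgen_eq_single]

theorem mapBase_mbdryGen (hφ : ∀ υ x, φ (S₁.act υ x) = S₂.act (φ υ) x) (υ : Y₁)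
    (L : List (List X)) : mapBase φ (mbdryGen M S₁ d υ L) = mbdryGen M S₂ d (φ υ) L := by
  simp only [mbdryGen, blockBdry, map_sum, map_smul, apply_ite (mapBase φ), map_add, map_zero,
    mapBase_mgen, hφ]

theorem mapBase_bdry (hφ : ∀ υ x, φ (S₁.act υ x) = S₂.act (φ υ) x) (g : Chains X Y₁) :
    mapBase φ (bdry M S₁ d g) = bdry M S₂ d (mapBase φ g) := by
  have hcomm : (mapBase φ).comp (bdry M S₁ d) = (bdry M S₂ d).comp (mapBase φ) :=
    Finsupp.lhom_ext fun q c => by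
      rw [LinearMap.comp_apply, LinearMap.comp_apply, bdry_single, map_smul, mapBase_single,
        bdry_single, mapBase_mbdryGen M S₁ S₂ d hφ]
  exact LinearMap.congr_fun hcomm g

end Equivariant

variable (M : MGRData X Λ) (S : MGRSet M Y) (d : X)

theorem bdry_mbdryGen_eq_zero (υ : Y) (L : List (List X)) (hL : validL M L) :
    bdry M S d (mbdryGen M S d υ L) = 0 := by
  -- `υ ↦ (υ, [])` moves `Y` into a universe covered by `bdry_mbdryGen_eq_zero_of_max_univ`.
  refine mapBase_injective (φ := fun υ : Y => (υ, ([] : List (List X))))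
    (fun _ _ h => congrArg Prod.fst h) ?_
  rw [map_zero, mapBase_bdry M S S.prefixed d (fun _ _ => rfl),
    mapBase_mbdryGen M S S.prefixed d (fun _ _ => rfl)]
  exact bdry_mbdryGen_eq_zero_of_max_univ M d L hL S.prefixed (υ, [])

end MGRChain

/-- The MGR chain complex satisfies `∂ ∘ ∂ = 0`. -/
theorem stmt_12 (X Λ Y : Type*) (M : MGRData X Λ) (S : MGRSet M Y) (d : X)
    (f : (Y × List (List X)) →₀ ℤ)
    (hf : ∀ q ∈ f.support, validL M q.2) :
    mbdry M S d (mbdry M S d f) = 0 := by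
  rw [MGRChain.mbdry_eq_bdry, mbdry, map_finsuppSum]
  refine Finset.sum_eq_zero fun q hq => ?_
  dsimp only
  rw [map_smul, MGRChain.bdry_mbdryGen_eq_zero M S d q.1 q.2 (hf q hq), smul_zero]
end

section
/- Let X = ⨆_λ G_λ be an MGR, Y an X-set, w = ⟨υ⟩⟨x₁⟩⋯⟨x_k⟩ a generator of C_n(X)_Y, and x ∈ X. Then ∂(w * x) = ∂(w) * x, where w * x = ⟨υ⋆x⟩⟨x₁*x⟩⋯⟨x_k*x⟩ (each block acted on entrywise by *x). -/
section
variable {X Λ Y : Type*} (M : MGRData X Λ) (S : MGRSet M Y)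

/-- The action `w ↦ w * x` on chains, sending a generator
`⟨υ⟩⟨x₁⟩⋯⟨x_k⟩` to `⟨υ⋆x⟩⟨x₁*x⟩⋯⟨x_k*x⟩`. -/
noncomputable def starMap (x : X) :
    ((Y × List (List X)) →₀ ℤ) → ((Y × List (List X)) →₀ ℤ) :=
  Finsupp.mapDomain
    (fun q => (S.act q.1 x, q.2.map (List.map (fun z => M.op z x))))

end


/-!
The action `· * x` commutes with every face of `∂` separately, with unchanged signs. Deleting the
last entry of a block obviously commutes with it; merging two consecutive entries does by
`(x₁x₂) * x = (x₁ * x)(x₂ * x)`, which applies because a block lies in one fiber. On the face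
`*x₁⟨x⁰⟩`, moving `* x` past `* x₁` is exactly self-distributivity `(z * x₁) * x = (z * x) * (x₁ * x)`
together with its `X`-set analogue `(υ ⋆ x₁) ⋆ x = (υ ⋆ x) ⋆ (x₁ * x)`.
-/

theorem List.getD_map_of_lt {α β : Type*} (f : α → β) {l : List α} {n : ℕ} (d : α) (e : β)
    (h : n < l.length) : (l.map f).getD n e = f (l.getD n d) := by
  rw [List.getD_eq_getElem _ _ (by simpa using h), List.getD_eq_getElem _ _ h, List.getElem_map]

theorem List.getD_mem_of_lt {α : Type*} {l : List α} {n : ℕ} (d : α) (h : n < l.length) :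
    l.getD n d ∈ l := by
  rw [List.getD_eq_getElem _ _ h]
  exact List.getElem_mem h

section
variable {X Λ Y : Type*} (M : MGRData X Λ) (S : MGRSet M Y) (d x : X)

lemma starMap_add (f g : (Y × List (List X)) →₀ ℤ) :
    starMap M S x (f + g) = starMap M S x f + starMap M S x g :=
  Finsupp.mapDomain_add

lemma starMap_zsmul (c : ℤ) (f : (Y × List (List X)) →₀ ℤ) :
    starMap M S x (c • f) = c • starMap M S x f :=
  Finsupp.mapDomain_smul c f

lemma starMap_sum {ι : Type*} (s : Finset ι) (f : ι → (Y × List (List X)) →₀ ℤ) :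
    starMap M S x (∑ i ∈ s, f i) = ∑ i ∈ s, starMap M S x (f i) :=
  Finsupp.mapDomain_finsetSum

lemma starMap_mgen (υ : Y) (L : List (List X)) :
    starMap M S x (mgen υ L) = mgen (S.act υ x) (L.map (List.map (M.op · x))) := by
  have hfilter : (L.map (List.map (M.op · x))).filter (fun b => !b.isEmpty) =
      (L.filter (fun b => !b.isEmpty)).map (List.map (M.op · x)) := by
    rw [List.filter_map]
    congr 1
    exact List.filter_congr fun b _ => by cases b <;> rfl
  rw [starMap, mgen, mgen, Finsupp.mapDomain_single, hfilter]

lemma op_comp_op (a b : X) :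
    (M.op · b) ∘ (M.op · a) = (M.op · (M.op a b)) ∘ (M.op · b) :=
  funext fun z => M.dist z a b

/-- The face `x^{j+1}` of a block in the notation of `∂̃`. -/
def blockFace (xs : List X) (j : ℕ) : List X :=
  if j + 1 < xs.length then
    xs.take j ++ [M.mul (xs.getD j d) (xs.getD (j + 1) d)] ++ xs.drop (j + 2)
  else xs.dropLast

lemma map_blockFace (xs : List X) (j : ℕ) (hxs : ∀ a ∈ xs, ∀ b ∈ xs, M.p a = M.p b) :
    (blockFace M d xs j).map (M.op · x) = blockFace M d (xs.map (M.op · x)) j := by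
  unfold blockFace
  rw [List.length_map]
  split_ifs with h
  · have hj : j < xs.length := by omega
    have hfib := hxs _ (List.getD_mem_of_lt d hj) _ (List.getD_mem_of_lt d h)
    rw [List.getD_map_of_lt _ d d hj, List.getD_map_of_lt _ d d h, ← M.mul_op _ _ _ hfib]
    simp only [List.map_append, List.map_take, List.map_drop, List.map_cons, List.map_nil]
  · exact List.map_dropLast

lemma blockBdry_cons (υ : Y) (pre post : List (List X)) (a : X) (t : List X) :
    blockBdry M S d υ pre (a :: t) post =
      mgen (S.act υ a) (pre.map (List.map (M.op · a)) ++ t :: post) +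
        ∑ j ∈ Finset.range (t.length + 1),
          (-1 : ℤ) ^ (j + 1) • mgen υ (pre ++ blockFace M d (a :: t) j :: post) :=
  rfl

lemma blockBdry_map (υ : Y) (pre post : List (List X)) (xs : List X)
    (hxs : ∀ a ∈ xs, ∀ b ∈ xs, M.p a = M.p b) :
    blockBdry M S d (S.act υ x) (pre.map (List.map (M.op · x))) (xs.map (M.op · x))
        (post.map (List.map (M.op · x))) =
      starMap M S x (blockBdry M S d υ pre xs post) := by
  cases xs with
  | nil => simp [blockBdry, starMap]
  | cons a t =>
    rw [List.map_cons, blockBdry_cons, blockBdry_cons, starMap_add, starMap_sum, starMap_mgen,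
      List.length_map, ← S.act_op]
    congr 1
    · simp only [List.map_append, List.map_cons, List.map_map, List.map_comp_map]
      rw [op_comp_op M a x]
    · refine Finset.sum_congr rfl fun j _ => ?_
      rw [starMap_zsmul, starMap_mgen]
      simp only [List.map_append, List.map_cons, map_blockFace M d x _ j hxs]

end

/-- For a generator `w = ⟨υ⟩⟨x₁⟩⋯⟨x_k⟩` and `x ∈ X`,
`∂(w * x) = ∂(w) * x`. -/
theorem stmt_13 (X Λ Y : Type*) (M : MGRData X Λ) (S : MGRSet M Y) (d : X)
    (υ : Y) (L : List (List X)) (hL : validL M L) (x : X) :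
    mbdryGen M S d (S.act υ x) (L.map (List.map (fun z => M.op z x))) =
    starMap M S x (mbdryGen M S d υ L) := by
  unfold mbdryGen
  rw [starMap_sum, List.length_map]
  refine Finset.sum_congr rfl fun i hi => ?_
  have hi : i < L.length := Finset.mem_range.mp hi
  have hsign : (((L.map (List.map (M.op · x))).take i).map List.length).sum =
      ((L.take i).map List.length).sum := by
    simp only [← List.map_take, List.map_map, Function.comp_def, List.length_map]
  rw [starMap_zsmul, hsign, ← List.map_take, ← List.map_drop, List.getD_map_of_lt _ [] [] hi,
    blockBdry_map M S d x υ _ _ _ (hL _ (List.getD_mem_of_lt [] hi)).2]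
end

section
/- Let X = ⨆_λ G_λ be an MGR with abelian group of coefficients A, and let θ: C₂(X) → A be an MGR 2-cocycle (with trivial X-set). Then the set X × A = ⨆_λ (G_λ × A) with operations (x,s)*(y,t) = (x*y, s + θ(⟨x⟩⟨y⟩)) and (x₁,s)(x₂,t) = (x₁x₂, s + t + θ(⟨x₁,x₂⟩)) for x₁,x₂ ∈ G_λ, is itself a multiple group rack. -/
private lemma MGR_sub_helper {A : Type*} [AddCommGroup A] {a b c d : A}
    (h : c = d) (k : a - b = d - c) : a = b := by
  rw [h, sub_self] at k
  exact sub_eq_zero.mp k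


/-- If `θ` is an MGR 2-cocycle of `X` (with trivial `X`-set), given on the two
kinds of generators by `θa x y = θ(⟨x⟩⟨y⟩)` and `θb x₁ x₂ = θ(⟨x₁,x₂⟩)`, then
`X × A = ⨆_λ (G_λ × A)` with `(x,s)*(y,t) = (x*y, s + θ(⟨x⟩⟨y⟩))` and
`(x₁,s)(x₂,t) = (x₁x₂, s + t + θ(⟨x₁,x₂⟩))` is a multiple group rack. -/
theorem stmt_14 (X Λ : Type*) (M : MGRData X Λ)
    (A : Type*) [AddCommGroup A] (θa θb : X → X → A)
    (c1 : ∀ x y z : X,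
      θa y z + θa x z + θa (M.op x z) (M.op y z) =
      θa y z + θa (M.op x y) z + θa x y)
    (c2 : ∀ x y₁ y₂ : X, M.p y₁ = M.p y₂ →
      θb y₁ y₂ + θa x (M.mul y₁ y₂) =
      θb y₁ y₂ + θa (M.op x y₁) y₂ + θa x y₁)
    (c3 : ∀ x₁ x₂ y : X, M.p x₁ = M.p x₂ →
      θa x₂ y + θa x₁ y + θb (M.op x₁ y) (M.op x₂ y) =
      θa (M.mul x₁ x₂) y + θb x₁ x₂)
    (c4 : ∀ x₁ x₂ x₃ : X, M.p x₁ = M.p x₂ → M.p x₂ = M.p x₃ →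
      θb x₂ x₃ + θb x₁ (M.mul x₂ x₃) =
      θb (M.mul x₁ x₂) x₃ + θb x₁ x₂) :
    ∃ N : MGRData (X × A) Λ,
      N.p = (fun q => M.p q.1) ∧
      N.mul = (fun q r => (M.mul q.1 r.1, q.2 + r.2 + θb q.1 r.1)) ∧
      N.op = (fun q r => (M.op q.1 r.1, q.2 + θa q.1 r.1)) := by
  have mul_ee : ∀ l, M.mul (M.one l) (M.one l) = M.one l := by
    intro l
    have h := M.mul_one (M.one l)
    rwa [M.p_one] at h
  have hbe : ∀ x : X, θb x (M.one (M.p x)) =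
      θb (M.one (M.p x)) (M.one (M.p x)) := by
    intro x
    set e := M.one (M.p x) with he
    have hpe : M.p x = M.p e := by rw [he, M.p_one]
    have h := c4 x e e hpe rfl
    rw [mul_ee, M.mul_one x] at h
    exact (add_right_cancel h).symm
  have heb : ∀ x : X, θb (M.one (M.p x)) x =
      θb (M.one (M.p x)) (M.one (M.p x)) := by
    intro x
    set e := M.one (M.p x) with he
    have hpe : M.p e = M.p x := by rw [he, M.p_one]
    have h := c4 e e x rfl hpe
    rw [mul_ee] at h
    have h1 : M.mul e x = x := M.one_mul x
    rw [h1] at h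
    exact add_left_cancel h
  have θa0 : ∀ (x : X) (l : Λ), θa x (M.one l) = 0 := by
    intro x l
    have h := c2 x (M.one l) (M.one l) rfl
    rw [mul_ee, M.op_oner] at h
    exact (left_eq_add.mp h)
  refine ⟨{
    p := fun q => M.p q.1
    mul := fun q r => (M.mul q.1 r.1, q.2 + r.2 + θb q.1 r.1)
    one := fun l => (M.one l, - θb (M.one l) (M.one l))
    inv := fun q => (M.inv q.1,
      -q.2 - θb (M.one (M.p q.1)) (M.one (M.p q.1)) - θb q.1 (M.inv q.1))
    op := fun q r => (M.op q.1 r.1, q.2 + θa q.1 r.1)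
    p_one := M.p_one
    p_mul := fun x y h => M.p_mul x.1 y.1 h
    p_inv := fun x => M.p_inv x.1
    mul_assoc := by
      intro x y z hxy hyz
      refine Prod.ext (M.mul_assoc x.1 y.1 z.1 hxy hyz) ?_
      exact MGR_sub_helper (c4 x.1 y.1 z.1 hxy hyz) (by dsimp only; abel)
    mul_one := by
      intro x
      refine Prod.ext (M.mul_one x.1) ?_
      exact MGR_sub_helper (hbe x.1).symm (by dsimp only; abel)
    one_mul := by
      intro x
      refine Prod.ext (M.one_mul x.1) ?_
      exact MGR_sub_helper (heb x.1).symm (by dsimp only; abel)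
    mul_inv := by
      intro x
      refine Prod.ext (M.mul_inv x.1) ?_
      show x.2 + (-x.2 - θb (M.one (M.p x.1)) (M.one (M.p x.1))
        - θb x.1 (M.inv x.1)) + θb x.1 (M.inv x.1)
        = - θb (M.one (M.p x.1)) (M.one (M.p x.1))
      abel
    op_mulr := by
      intro x y₁ y₂ hp
      refine Prod.ext (M.op_mulr x.1 y₁.1 y₂.1 hp) ?_
      exact MGR_sub_helper (c2 x.1 y₁.1 y₂.1 hp).symm (by dsimp only; abel)
    op_oner := by
      intro x l
      refine Prod.ext (M.op_oner x.1 l) ?_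
      show x.2 + θa x.1 (M.one l) = x.2
      rw [θa0 x.1 l, add_zero]
    dist := by
      intro x y z
      refine Prod.ext (M.dist x.1 y.1 z.1) ?_
      exact MGR_sub_helper (c1 x.1 y.1 z.1) (by dsimp only; abel)
    p_op := fun x₁ x₂ y h => M.p_op x₁.1 x₂.1 y.1 h
    mul_op := by
      intro x₁ x₂ y h
      refine Prod.ext (M.mul_op x₁.1 x₂.1 y.1 h) ?_
      exact MGR_sub_helper (c3 x₁.1 x₂.1 y.1 h) (by dsimp only; abel)
  }, rfl, rfl, rfl⟩
end

section
/- Let Q be a rack and Y a Q-set such that type Q_Y is finite, let k ≥ 1, and let X = Q × Z_{k·type Q_Y} be the associated MGR with (a,i)*(b,j) = (a *^j b, i) and (a,i)(a,j) = (a, i+j). Then the map ⋆: Y × X → Y defined by υ ⋆ (a,i) = υ ⋆^i a makes Y an X-set: υ ⋆ (a,0) = υ, υ ⋆ ((a,i)(a,j)) = (υ ⋆ (a,i)) ⋆ (a,j), and (υ ⋆ x) ⋆ y = (υ ⋆ y) ⋆ (x*y) for all υ ∈ Y, x,y ∈ X. -/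
/-- `a *^n b`. -/
def RackS.pw {Q : Type*} (R : RackS Q) (n : ℕ) (a b : Q) : Q :=
  (fun x => R.op x b)^[n] a

/-- `υ ⋆^n a`. -/
def QSet.pw {Q Y : Type*} {R : RackS Q} (S : QSet R Y) (n : ℕ) (υ : Y) (a : Q) : Y :=
  (fun w => S.act w a)^[n] υ

/-- `type Q_Y`. -/
noncomputable def typeQY {Q Y : Type*} (R : RackS Q) (S : QSet R Y) : ℕ :=
  sInf {n : ℕ | 0 < n ∧ (∀ a b : Q, R.pw n a b = a) ∧
    (∀ (υ : Y) (c : Q), S.pw n υ c = υ)}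

/-- If `type Q_Y` is finite and `k ≥ 1`, then `Y` is an `X`-set of the
associated MGR `X = Q × ℤ_{k·type Q_Y}` via `υ ⋆ (a,i) = υ ⋆^i a`:
`υ ⋆ (a,0) = υ`, `υ ⋆ ((a,i)(a,j)) = (υ ⋆ (a,i)) ⋆ (a,j)`, and
`(υ ⋆ x) ⋆ y = (υ ⋆ y) ⋆ (x*y)` where `(a,i)*(b,j) = (a *^j b, i)`. -/
theorem stmt_17 (Q Y : Type*) (R : RackS Q) (S : QSet R Y)
    (hfin : ∃ n : ℕ, 0 < n ∧ (∀ a b : Q, R.pw n a b = a) ∧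
      (∀ (υ : Y) (c : Q), S.pw n υ c = υ))
    (k : ℕ) (hk : 1 ≤ k) :
    -- υ ⋆ (a,0) = υ
    (∀ (υ : Y) (a : Q),
      S.pw ((0 : ZMod (k * typeQY R S))).val υ a = υ) ∧
    -- υ ⋆ ((a,i)(a,j)) = (υ ⋆ (a,i)) ⋆ (a,j)
    (∀ (υ : Y) (a : Q) (i j : ZMod (k * typeQY R S)),
      S.pw (i + j).val υ a = S.pw j.val (S.pw i.val υ a) a) ∧
    -- (υ ⋆ (a,i)) ⋆ (b,j) = (υ ⋆ (b,j)) ⋆ ((a,i)*(b,j))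
    (∀ (υ : Y) (a b : Q) (i j : ZMod (k * typeQY R S)),
      S.pw j.val (S.pw i.val υ a) b =
      S.pw i.val (S.pw j.val υ b) (R.pw j.val a b)) := by
  have hmem := Nat.sInf_mem (⟨_, hfin.choose_spec⟩ : Set.Nonempty
    {n : ℕ | 0 < n ∧ (∀ a b : Q, R.pw n a b = a) ∧ (∀ (υ : Y) (c : Q), S.pw n υ c = υ)})
  set t := typeQY R S with hts
  obtain ⟨htpos, hR', hS'⟩ := hmem
  have hR : ∀ a b : Q, R.pw t a b = a := hR'
  have hS : ∀ (υ : Y) (c : Q), S.pw t υ c = υ := hS'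
  have hNpos : 0 < k * t := Nat.mul_pos hk htpos
  haveI : NeZero (k * t) := ⟨hNpos.ne'⟩
  have pw_add : ∀ (m p : ℕ) (υ : Y) (a : Q),
      S.pw (m + p) υ a = S.pw m (S.pw p υ a) a := by
    intro m p υ a; exact Function.iterate_add_apply _ m p υ
  have pw_succ : ∀ (m : ℕ) (υ : Y) (a : Q),
      S.pw (m + 1) υ a = S.act (S.pw m υ a) a := by
    intro m υ a; exact Function.iterate_succ_apply' _ m υ
  have Rpw_succ : ∀ (m : ℕ) (a b : Q),
      R.pw (m + 1) a b = R.op (R.pw m a b) b := by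
    intro m a b; exact Function.iterate_succ_apply' _ m a
  have pw_mul : ∀ (q : ℕ) (υ : Y) (a : Q), S.pw (q * t) υ a = υ := by
    intro q
    induction q with
    | zero => intro υ a; rw [Nat.zero_mul]; rfl
    | succ q ih =>
      intro υ a
      rw [show (q + 1) * t = q * t + t by ring, pw_add, hS, ih]
  have pw_mod : ∀ (m : ℕ) (υ : Y) (a : Q), S.pw m υ a = S.pw (m % t) υ a := by
    intro m υ a
    conv_lhs => rw [← Nat.mod_add_div m t]
    rw [pw_add, show t * (m / t) = (m / t) * t from Nat.mul_comm _ _, pw_mul]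
  have claimA : ∀ (j : ℕ) (w : Y) (a b : Q),
      S.pw j (S.act w a) b = S.act (S.pw j w b) (R.pw j a b) := by
    intro j
    induction j with
    | zero => intro w a b; rfl
    | succ j ih =>
      intro w a b
      rw [pw_succ, ih, S.compat, ← pw_succ, ← Rpw_succ]
  have claimB : ∀ (i j : ℕ) (υ : Y) (a b : Q),
      S.pw j (S.pw i υ a) b = S.pw i (S.pw j υ b) (R.pw j a b) := by
    intro i
    induction i with
    | zero => intro j υ a b; rfl
    | succ i ih =>
      intro j υ a b
      rw [pw_succ, claimA, ih, ← pw_succ]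
  refine ⟨?_, ?_, ?_⟩
  · intro υ a; rw [ZMod.val_zero]; rfl
  · intro υ a i j
    rw [ZMod.val_add, pw_mod,
      Nat.mod_mod_of_dvd _ (dvd_mul_left t k), ← pw_mod, Nat.add_comm, pw_add]
  · intro υ a b i j
    exact claimB i.val j.val υ a b
end

section
/- Let Q be a rack and k ∈ Z_{>0} with type Q finite. Define X = Q × Z_{k·type Q} with (a,g)*(b,h) = (a *^h b, g) and fiberwise group structure (a,g)(a,h) = (a, g+h). Then X is a multiple group rack: for all x ∈ X and y₁,y₂ in a common fiber, x*(y₁y₂) = (x*y₁)*y₂ and x*(b,0) = x; (x*y)*z = (x*z)*(y*z) for all x,y,z; and ((a,g)(a,g'))*(b,h) = ((a,g)*(b,h))((a,g')*(b,h)). -/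
/-- `type Q`. -/
noncomputable def typeQ {Q : Type*} (R : RackS Q) : ℕ :=
  sInf {n : ℕ | 0 < n ∧ ∀ a b : Q, R.pw n a b = a}

section Aux
variable {Q : Type*} (R : RackS Q)

lemma pw_add (m n : ℕ) (a b : Q) : R.pw (m + n) a b = R.pw m (R.pw n a b) b := by
  simp [RackS.pw, Function.iterate_add_apply]

lemma pw_succ (n : ℕ) (a b : Q) : R.pw (n + 1) a b = R.op (R.pw n a b) b :=
  Function.iterate_succ_apply' _ n a

lemma op_pw (m : ℕ) (x y c : Q) :
    R.pw m (R.op x y) c = R.op (R.pw m x c) (R.pw m y c) := by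
  induction m with
  | zero => simp [RackS.pw]
  | succ m ih => rw [pw_succ, pw_succ, pw_succ, ih, R.dist]

lemma pw_pw (m n : ℕ) (a b c : Q) :
    R.pw m (R.pw n a b) c = R.pw n (R.pw m a c) (R.pw m b c) := by
  induction n with
  | zero => simp [RackS.pw]
  | succ n ih => rw [pw_succ, op_pw, ih, pw_succ]

lemma typeQ_spec (hfin : ∃ n : ℕ, 0 < n ∧ ∀ a b : Q, R.pw n a b = a) :
    0 < typeQ R ∧ ∀ a b : Q, R.pw (typeQ R) a b = a :=
  Nat.sInf_mem hfin

lemma pw_mul (hfin : ∃ n : ℕ, 0 < n ∧ ∀ a b : Q, R.pw n a b = a)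
    (c : ℕ) (a b : Q) : R.pw (c * typeQ R) a b = a := by
  induction c with
  | zero => simp [RackS.pw]
  | succ c ih => rw [Nat.succ_mul, pw_add, (typeQ_spec R hfin).2, ih]

lemma pw_mod (hfin : ∃ n : ℕ, 0 < n ∧ ∀ a b : Q, R.pw n a b = a)
    (k n : ℕ) (a b : Q) : R.pw (n % (k * typeQ R)) a b = R.pw n a b := by
  conv_rhs => rw [← Nat.mod_add_div n (k * typeQ R)]
  have h2 : k * typeQ R * (n / (k * typeQ R)) =
      (k * (n / (k * typeQ R))) * typeQ R := by ring
  rw [pw_add, h2, pw_mul R hfin]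

end Aux

/-- The associated MGR: if `type Q` is finite and `k > 0`, then
`X = Q × ℤ_{k·type Q}` with `(a,g)*(b,h) = (a *^h b, g)` and fiberwise
multiplication `(a,g)(a,h) = (a, g+h)` is a multiple group rack. -/
theorem stmt_18 (Q : Type*) (R : RackS Q)
    (hfin : ∃ n : ℕ, 0 < n ∧ ∀ a b : Q, R.pw n a b = a)
    (k : ℕ) (hk : 0 < k) :
    ∀ rop : (Q × ZMod (k * typeQ R)) → (Q × ZMod (k * typeQ R)) →
        (Q × ZMod (k * typeQ R)),
      (rop = fun x y => (R.pw y.2.val x.1 y.1, x.2)) →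
    ∀ fmul : (Q × ZMod (k * typeQ R)) → (Q × ZMod (k * typeQ R)) →
        (Q × ZMod (k * typeQ R)),
      (fmul = fun x y => (x.1, x.2 + y.2)) →
      -- x * (y₁ y₂) = (x * y₁) * y₂ for y₁, y₂ in a common fiber
      (∀ (x : Q × ZMod (k * typeQ R)) (b : Q) (h h' : ZMod (k * typeQ R)),
        rop x (fmul (b, h) (b, h')) = rop (rop x (b, h)) (b, h')) ∧
      -- x * e = x
      (∀ (x : Q × ZMod (k * typeQ R)) (b : Q), rop x (b, 0) = x) ∧
      -- self-distributivity
      (∀ x y z : Q × ZMod (k * typeQ R),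
        rop (rop x y) z = rop (rop x z) (rop y z)) ∧
      -- (x₁ x₂) * y = (x₁ * y)(x₂ * y)
      (∀ (a : Q) (g g' : ZMod (k * typeQ R)) (y : Q × ZMod (k * typeQ R)),
        rop (fmul (a, g) (a, g')) y = fmul (rop (a, g) y) (rop (a, g') y)) := by
  intro rop hrop fmul hfmul
  subst hrop hfmul
  have hN : 0 < k * typeQ R := Nat.mul_pos hk (typeQ_spec R hfin).1
  have : NeZero (k * typeQ R) := ⟨hN.ne'⟩
  refine ⟨?_, ?_, ?_, ?_⟩
  · intro x b h h'
    simp only [Prod.mk.injEq]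
    refine ⟨?_, trivial⟩
    rw [ZMod.val_add, add_comm, pw_mod R hfin, pw_add]
  · intro x b
    have : (0 : ZMod (k * typeQ R)).val = 0 := ZMod.val_zero
    simp [this, RackS.pw]
  · intro x y z
    simp only [Prod.mk.injEq]
    exact ⟨pw_pw R _ _ _ _ _, trivial⟩
  · intro a g g' y
    simp
end

section
/- Let p be an odd prime and let R_p = Z/pZ be the dihedral quandle with i*j = 2j−i, viewed as an R_p-set over itself. Define θ_p: R_p × R_p × R_p → Z/pZ by θ_p(i,j,k) = (i−j)·((j^p + (2k−j)^p − 2k^p)/p) mod p, where the integer division by p is performed on integer representatives before reduction. Then θ_p satisfies the shadow rack 2-cocycle condition: θ_p(υ*a, b, c) + θ_p(υ, a, c) + θ_p(υ*c, a*c, b*c) = θ_p(υ, b, c) + θ_p(υ*b, a*b, c) + θ_p(υ, a, b) for all υ, a, b, c ∈ R_p. -/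
/-- The numerator of the Mochizuki cocycle. -/
def Nint (p : ℕ) (x y : ℤ) : ℤ := x ^ p + (2 * y - x) ^ p - 2 * y ^ p

lemma Nint_dvd (p : ℕ) (hp : p.Prime) (x y : ℤ) : (p : ℤ) ∣ Nint p x y := by
  haveI : Fact p.Prime := ⟨hp⟩
  have h : ((Nint p x y : ℤ) : ZMod p) = 0 := by
    simp only [Nint]
    push_cast
    rw [ZMod.pow_card, ZMod.pow_card, ZMod.pow_card]
    ring
  exact (ZMod.intCast_zmod_eq_zero_iff_dvd _ _).mp h

lemma Nint_quot_congr (p : ℕ) (hp : p.Prime) {x x' y y' : ℤ}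
    (hx : ((x : ZMod p)) = (x' : ZMod p)) (hy : ((y : ZMod p)) = (y' : ZMod p)) :
    ((Nint p x y / p : ℤ) : ZMod p) = ((Nint p x' y' / p : ℤ) : ZMod p) := by
  haveI : Fact p.Prime := ⟨hp⟩
  have hp0 : (p : ℤ) ≠ 0 := by exact_mod_cast hp.ne_zero
  have hxd : (p : ℤ) ∣ x - x' := by
    have := (ZMod.intCast_eq_intCast_iff _ _ _).mp hx
    exact Int.ModEq.dvd this.symm
  have hyd : (p : ℤ) ∣ y - y' := by
    have := (ZMod.intCast_eq_intCast_iff _ _ _).mp hy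
    exact Int.ModEq.dvd this.symm
  have h1 : ((p : ℤ) ^ 2) ∣ x ^ p - x' ^ p := by
    have := dvd_sub_pow_of_dvd_sub (p := p) (a := x) (b := x') hxd 1
    simpa using this
  have h3 : ((p : ℤ) ^ 2) ∣ y ^ p - y' ^ p := by
    have := dvd_sub_pow_of_dvd_sub (p := p) (a := y) (b := y') hyd 1
    simpa using this
  have hmid : (p : ℤ) ∣ (2 * y - x) - (2 * y' - x') := by
    have : (2 * y - x) - (2 * y' - x') = 2 * (y - y') - (x - x') := by ring
    rw [this]
    exact dvd_sub (hyd.mul_left 2) hxd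
  have h2 : ((p : ℤ) ^ 2) ∣ (2 * y - x) ^ p - (2 * y' - x') ^ p := by
    have := dvd_sub_pow_of_dvd_sub (p := p) (a := 2 * y - x) (b := 2 * y' - x') hmid 1
    simpa using this
  have hdiff : ((p : ℤ) ^ 2) ∣ Nint p x y - Nint p x' y' := by
    have e : Nint p x y - Nint p x' y' =
        (x ^ p - x' ^ p) + ((2 * y - x) ^ p - (2 * y' - x') ^ p)
          - 2 * (y ^ p - y' ^ p) := by simp only [Nint]; ring
    rw [e]
    exact dvd_sub (dvd_add h1 h2) (h3.mul_left 2)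
  obtain ⟨q, hq⟩ := Nint_dvd p hp x y
  obtain ⟨q', hq'⟩ := Nint_dvd p hp x' y'
  have hq1 : Nint p x y / p = q := by rw [hq]; exact Int.mul_ediv_cancel_left _ hp0
  have hq2 : Nint p x' y' / p = q' := by rw [hq']; exact Int.mul_ediv_cancel_left _ hp0
  rw [hq1, hq2]
  have : (p : ℤ) ∣ q - q' := by
    have h : ((p : ℤ) ^ 2) ∣ (p : ℤ) * (q - q') := by
      have e : (p : ℤ) * (q - q') = Nint p x y - Nint p x' y' := by
        rw [hq, hq']; ring
      rw [e]; exact hdiff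
    rw [pow_two] at h
    exact (mul_dvd_mul_iff_left hp0).mp h
  rw [ZMod.intCast_eq_intCast_iff]
  exact Int.modEq_iff_dvd.mpr (by rw [show q' - q = -(q - q') by ring]; exact dvd_neg.mpr this)

lemma Nint_quot_sum (p : ℕ) (hp : p.Prime) (A B C : ℤ) :
    2 * (Nint p B C / p) - Nint p A C / p + Nint p (2*C-A) (2*C-B) / p
      - Nint p (2*B-A) C / p + Nint p A B / p = 0 := by
  have hp0 : (p : ℤ) ≠ 0 := by exact_mod_cast hp.ne_zero
  obtain ⟨q1, h1⟩ := Nint_dvd p hp B C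
  obtain ⟨q2, h2⟩ := Nint_dvd p hp A C
  obtain ⟨q3, h3⟩ := Nint_dvd p hp (2*C-A) (2*C-B)
  obtain ⟨q4, h4⟩ := Nint_dvd p hp (2*B-A) C
  obtain ⟨q5, h5⟩ := Nint_dvd p hp A B
  rw [h1, h2, h3, h4, h5, Int.mul_ediv_cancel_left _ hp0, Int.mul_ediv_cancel_left _ hp0,
    Int.mul_ediv_cancel_left _ hp0, Int.mul_ediv_cancel_left _ hp0,
    Int.mul_ediv_cancel_left _ hp0]
  have hz : (p : ℤ) * (2 * q1 - q2 + q3 - q4 + q5) = 0 := by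
    simp only [Nint] at h1 h2 h3 h4 h5
    linear_combination (-2 : ℤ) * h1 + h2 - h3 + h4 - h5
  rcases mul_eq_zero.mp hz with h | h
  · exact absurd h hp0
  · exact h

/-- The Mochizuki 3-cocycle of the dihedral quandle `R_p`, viewed as a shadow
rack 2-cocycle: `θ_p(i,j,k) = (i−j)·((j^p + (2k−j)^p − 2k^p)/p) mod p`,
the integer division by `p` being performed on integer representatives. -/
def mochizuki (p : ℕ) (i j k : ZMod p) : ZMod p :=
  ((((i.val : ℤ) - (j.val : ℤ)) *
    (((j.val : ℤ) ^ p + (2 * (k.val : ℤ) - (j.val : ℤ)) ^ p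
      - 2 * (k.val : ℤ) ^ p) / (p : ℤ)) : ℤ) : ZMod p)

/-- For an odd prime `p`, the Mochizuki cocycle satisfies the shadow rack
2-cocycle condition for the dihedral quandle `R_p` (`i*j = 2j−i`), acting on
itself. -/
theorem stmt_19 (p : ℕ) (hp : p.Prime) (hodd : Odd p) :
    ∀ rop : ZMod p → ZMod p → ZMod p, (rop = fun i j => 2 * j - i) →
    ∀ υ a b c : ZMod p,
      mochizuki p (rop υ a) b c + mochizuki p υ a c
        + mochizuki p (rop υ c) (rop a c) (rop b c) =
      mochizuki p υ b c + mochizuki p (rop υ b) (rop a b) c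
        + mochizuki p υ a b := by
  haveI : Fact p.Prime := ⟨hp⟩
  haveI : NeZero p := ⟨hp.ne_zero⟩
  intro rop hrop υ a b c
  subst hrop
  have key : ∀ i j k : ZMod p, mochizuki p i j k
      = (i - j) * ((Nint p (j.val : ℤ) (k.val : ℤ) / p : ℤ) : ZMod p) := by
    intro i j k
    simp only [mochizuki, Nint]
    push_cast
    simp [ZMod.natCast_val, ZMod.cast_id]
  simp only [key]
  have h1 : ((Nint p (((2*c - a : ZMod p).val : ℤ)) (((2*c - b : ZMod p).val : ℤ)) / p : ℤ) : ZMod p)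
      = ((Nint p (2*(c.val : ℤ) - (a.val : ℤ)) (2*(c.val : ℤ) - (b.val : ℤ)) / p : ℤ) : ZMod p) := by
    apply Nint_quot_congr p hp <;> push_cast <;>
      simp [ZMod.natCast_val, ZMod.cast_id]
  have h2 : ((Nint p (((2*b - a : ZMod p).val : ℤ)) ((c.val : ℤ)) / p : ℤ) : ZMod p)
      = ((Nint p (2*(b.val : ℤ) - (a.val : ℤ)) ((c.val : ℤ)) / p : ℤ) : ZMod p) := by
    apply Nint_quot_congr p hp <;> push_cast <;>
      simp [ZMod.natCast_val, ZMod.cast_id]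
  rw [h1, h2]
  have hsum := Nint_quot_sum p hp (a.val : ℤ) (b.val : ℤ) (c.val : ℤ)
  have hz : (2 : ZMod p) * ((Nint p (b.val : ℤ) (c.val : ℤ) / p : ℤ) : ZMod p)
      - ((Nint p (a.val : ℤ) (c.val : ℤ) / p : ℤ) : ZMod p)
      + ((Nint p (2*(c.val : ℤ) - (a.val : ℤ)) (2*(c.val : ℤ) - (b.val : ℤ)) / p : ℤ) : ZMod p)
      - ((Nint p (2*(b.val : ℤ) - (a.val : ℤ)) ((c.val : ℤ)) / p : ℤ) : ZMod p)
      + ((Nint p (a.val : ℤ) (b.val : ℤ) / p : ℤ) : ZMod p) = 0 := by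
    exact_mod_cast congrArg (fun z : ℤ => (z : ZMod p)) hsum
  linear_combination (a - υ) * hz
end
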